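/- Let C be a class of LTL formulas and ≈_C an equivalence on traces for C. For every HyperLTL sentence φ in the class 2^C and all sets of infinite traces T and T' that are (|V(φ)|, C)-equivalent, where V(φ) is the set of trace variables occurring in φ: T ⊨_H φ if and only if T' ⊨_H φ. -/

import Mathlib

/-- LTL formulas over an alphabet `A`. -/
inductive LTL (A : Type) : Type where
  | atom : A → LTL A
  | not  : LTL A → LTL A
  | or   : LTL A → LTL A → LTL A
  | next : LTL A → LTL A
  | untl : LTL A → LTL A → LTL A

/-- LTL satisfaction over an infinite trace. -/
def LTL.Sat {A : Type} : (ℕ → A → Bool) → LTL A → Prop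
  | τ, .atom a   => τ 0 a = true
  | τ, .not φ    => ¬ LTL.Sat τ φ
  | τ, .or φ ψ   => LTL.Sat τ φ ∨ LTL.Sat τ ψ
  | τ, .next φ   => LTL.Sat (fun n => τ (n + 1)) φ
  | τ, .untl φ ψ => ∃ j, LTL.Sat (fun n => τ (n + j)) ψ ∧
      ∀ j' < j, LTL.Sat (fun n => τ (n + j')) φ

/-- HyperLTL formulas over alphabet `X`, trace variables are natural numbers;
the quantifier-free part is an LTL formula over atoms `a_π = (a, π)`. -/
inductive HyperLTL (X : Type) : Type where
  | ex  : ℕ → HyperLTL X → HyperLTL X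
  | all : ℕ → HyperLTL X → HyperLTL X
  | qf  : LTL (X × ℕ) → HyperLTL X

/-- HyperLTL satisfaction of a quantifier-free formula by a partial trace
assignment over `T` at time `i`. -/
def HSatQF {X : Type} {T : Set (ℕ → X → Bool)} (Θ : ℕ → Option ↥T) : ℕ → LTL (X × ℕ) → Prop
  | i, .atom p   => ∃ τ : ↥T, Θ p.2 = some τ ∧ τ.1 i p.1 = true
  | i, .not φ    => ¬ HSatQF Θ i φ
  | i, .or φ ψ   => HSatQF Θ i φ ∨ HSatQF Θ i ψ
  | i, .next φ   => HSatQF Θ (i + 1) φ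
  | i, .untl φ ψ => ∃ j, i ≤ j ∧ HSatQF Θ j ψ ∧ ∀ j', i ≤ j' → j' < j → HSatQF Θ j' φ

/-- HyperLTL satisfaction: quantifiers range over `T`. -/
def HSat {X : Type} {T : Set (ℕ → X → Bool)} : (ℕ → Option ↥T) → ℕ → HyperLTL X → Prop
  | Θ, i, .ex π ψ  => ∃ τ : ↥T, HSat (Function.update Θ π (some τ)) i ψ
  | Θ, i, .all π ψ => ∀ τ : ↥T, HSat (Function.update Θ π (some τ)) i ψ
  | Θ, i, .qf φ    => HSatQF Θ i φ

/-- `T ⊨_H ψ` : satisfaction from the empty trace assignment at time 0. -/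
def HModels {X : Type} (T : Set (ℕ → X → Bool)) (ψ : HyperLTL X) : Prop :=
  HSat (T := T) (fun _ => none) 0 ψ

/-- Trace variables occurring in a quantifier-free HyperLTL formula. -/
def LTL.tvars {X : Type} : LTL (X × ℕ) → Finset ℕ
  | .atom p   => {p.2}
  | .not φ    => φ.tvars
  | .or φ ψ   => φ.tvars ∪ ψ.tvars
  | .next φ   => φ.tvars
  | .untl φ ψ => φ.tvars ∪ ψ.tvars

/-- Free trace variables of a HyperLTL formula. -/
def HyperLTL.free {X : Type} : HyperLTL X → Finset ℕ
  | .ex π ψ  => ψ.free.erase π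
  | .all π ψ => ψ.free.erase π
  | .qf φ    => φ.tvars

/-- A HyperLTL sentence has no free trace variables. -/
def HyperLTL.Closed {X : Type} (ψ : HyperLTL X) : Prop := ψ.free = ∅

/-- All trace variables occurring in a HyperLTL formula. -/
def HyperLTL.vars {X : Type} : HyperLTL X → Finset ℕ
  | .ex π ψ  => insert π ψ.vars
  | .all π ψ => insert π ψ.vars
  | .qf φ    => φ.tvars

/-- Flattening of a trace assignment: an infinite trace over the alphabet `X × ℕ`
(`false` on pairs `(a, π)` with `π` outside the domain of the assignment). -/
def flat {X : Type} {T : Set (ℕ → X → Bool)} (Θ : ℕ → Option ↥T) : ℕ → (X × ℕ) → Bool :=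
  fun i p => ((Θ p.2).map (fun τ => τ.1 i p.1)).getD false

/-- The domain of the assignment consists of exactly `k` trace variables. -/
def HasDomCard {X : Type} {T : Set (ℕ → X → Bool)} (Θ : ℕ → Option ↥T) (k : ℕ) : Prop :=
  ∃ s : Finset ℕ, (∀ π, (Θ π).isSome ↔ π ∈ s) ∧ s.card = k

/-- Composition `f ∘ Θ` of a bijection `f : T → T'` with an assignment over `T`. -/
def mapAssign {X : Type} {T T' : Set (ℕ → X → Bool)} (f : ↥T ≃ ↥T') (Θ : ℕ → Option ↥T) :
    ℕ → Option ↥T' := fun π => (Θ π).map f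

/-- `R` is an equivalence on traces for the class `C` of LTL formulas: an equivalence
relation such that `R`-related traces satisfy exactly the same formulas of `C`. -/
def EquivOnTracesFor {A : Type} (C : Set (LTL A))
    (R : (ℕ → A → Bool) → (ℕ → A → Bool) → Prop) : Prop :=
  Equivalence R ∧ ∀ φ ∈ C, ∀ τ τ', R τ τ' → (LTL.Sat τ φ ↔ LTL.Sat τ' φ)

/-- The bijection `f : T → T'` witnesses that `T` and `T'` are `(k, C)`-equivalent
(w.r.t. the trace equivalence `R`). -/
def KCEquivWith {X : Type}
    (R : (ℕ → (X × ℕ) → Bool) → (ℕ → (X × ℕ) → Bool) → Prop) (k : ℕ)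
    (T T' : Set (ℕ → X → Bool)) (f : ↥T ≃ ↥T') : Prop :=
  (∀ Θ : ℕ → Option ↥T, HasDomCard Θ k → R (flat Θ) (flat (mapAssign f Θ))) ∧
  (∀ Θ' : ℕ → Option ↥T', HasDomCard Θ' k → R (flat Θ') (flat (mapAssign f.symm Θ')))

/-- A HyperLTL formula `Q₁π₁…Qₙπₙ.φ` lies in the class `2^C` iff its quantifier-free
part `φ`, read as an LTL formula over the alphabet `X × ℕ`, belongs to `C`. -/
def HyperLTL.InClass {X : Type} (C : Set (LTL (X × ℕ))) : HyperLTL X → Prop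
  | .ex _ ψ  => ψ.InClass C
  | .all _ ψ => ψ.InClass C
  | .qf φ    => φ ∈ C

/-! Under the assignment built by the quantifier prefix of a sentence, every trace variable of
the quantifier-free core is defined, so the HyperLTL semantics of the core coincides with the
LTL semantics of the flattened assignment. The prefix binds exactly `|V(φ)|` variables, so if
`f` witnesses `(|V(φ)|, C)`-equivalence, the flattenings of `Θ` and `f ∘ Θ` are equivalent and
satisfy the same formulas of `C`. As `f` is a bijection, it transports witnesses of `∃` and
counterexamples of `∀` in both directions, so the quantifiers are handled by induction. -/

section

variable {X : Type}

theorem LTL.sat_congr_index {A : Type} (φ : LTL A) (τ : ℕ → A → Bool) {a b : ℕ → ℕ}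
    (h : ∀ n, a n = b n) : LTL.Sat (fun n => τ (a n)) φ ↔ LTL.Sat (fun n => τ (b n)) φ := by
  rw [funext h]

theorem hsatQF_iff_sat_flat {T : Set (ℕ → X → Bool)} {Θ : ℕ → Option ↥T} {φ : LTL (X × ℕ)}
    (hΘ : ∀ π ∈ φ.tvars, (Θ π).isSome) (i : ℕ) :
    HSatQF Θ i φ ↔ LTL.Sat (fun n => flat Θ (n + i)) φ := by
  induction φ generalizing i with
  | atom p =>
    obtain ⟨τ, hτ⟩ := Option.isSome_iff_exists.mp (hΘ p.2 (Finset.mem_singleton_self _))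
    simp [HSatQF, LTL.Sat, flat, hτ]
  | not φ ih => exact not_congr (ih hΘ i)
  | or φ ψ ihφ ihψ =>
    exact or_congr (ihφ (fun π h => hΘ π (Finset.mem_union_left _ h)) i)
      (ihψ (fun π h => hΘ π (Finset.mem_union_right _ h)) i)
  | next φ ih =>
    rw [HSatQF, LTL.Sat, ih hΘ]
    exact LTL.sat_congr_index φ _ fun n => by omega
  | untl φ ψ ihφ ihψ =>
    have hφ := ihφ fun π h => hΘ π (Finset.mem_union_left _ h)
    have hψ := ihψ fun π h => hΘ π (Finset.mem_union_right _ h)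
    simp only [HSatQF, LTL.Sat, hφ, hψ, add_assoc]
    constructor
    · rintro ⟨j, hij, hψj, hφj⟩
      exact ⟨j - i, by rwa [Nat.sub_add_cancel hij], fun j' hj' => hφj _ (by omega) (by omega)⟩
    · rintro ⟨d, hψd, hφd⟩
      refine ⟨d + i, by omega, hψd, fun j' hij' hj' => ?_⟩
      simpa only [Nat.sub_add_cancel hij'] using hφd (j' - i) (by omega)

theorem hsatQF_zero_iff_of_related {T T' : Set (ℕ → X → Bool)} {C : Set (LTL (X × ℕ))}
    {R : (ℕ → (X × ℕ) → Bool) → (ℕ → (X × ℕ) → Bool) → Prop}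
    (hR : ∀ φ ∈ C, ∀ τ τ', R τ τ' → (LTL.Sat τ φ ↔ LTL.Sat τ' φ))
    {φ : LTL (X × ℕ)} (hφ : φ ∈ C) {Θ : ℕ → Option ↥T} {Θ' : ℕ → Option ↥T'}
    (hΘ : ∀ π ∈ φ.tvars, (Θ π).isSome) (hΘ' : ∀ π ∈ φ.tvars, (Θ' π).isSome)
    (hrel : R (flat Θ) (flat Θ')) :
    HSatQF Θ 0 φ ↔ HSatQF Θ' 0 φ := by
  rw [hsatQF_iff_sat_flat hΘ, hsatQF_iff_sat_flat hΘ']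
  exact hR φ hφ _ _ hrel

theorem mapAssign_update {T T' : Set (ℕ → X → Bool)} (f : ↥T ≃ ↥T') (Θ : ℕ → Option ↥T)
    (π : ℕ) (τ : ↥T) :
    mapAssign f (Function.update Θ π (some τ)) =
      Function.update (mapAssign f Θ) π (some (f τ)) := by
  funext π'
  by_cases hπ : π' = π <;> simp [mapAssign, Function.update, hπ]

/-- The quantifiers of `ψ` extend the domain `s` of `Θ` to `s ∪ vars ψ`; at the quantifier-free
core this is the domain whose size the `(k, C)`-equivalence constrains. -/
def FitsAt {T : Set (ℕ → X → Bool)} (k : ℕ) (Θ : ℕ → Option ↥T) (ψ : HyperLTL X) : Prop :=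
  ∃ s : Finset ℕ, (∀ π, (Θ π).isSome ↔ π ∈ s) ∧ ψ.free ⊆ s ∧ (s ∪ ψ.vars).card = k

section FitsAt

variable {T : Set (ℕ → X → Bool)} {k : ℕ} {Θ : ℕ → Option ↥T}

theorem fitsAt_empty_of_closed {ψ : HyperLTL X} (hψ : ψ.Closed) :
    FitsAt (T := T) ψ.vars.card (fun _ => none) ψ :=
  ⟨∅, by simp, (show ψ.free = ∅ from hψ).le, by simp⟩

theorem FitsAt.update {ψ : HyperLTL X} {π : ℕ} (hΘ : FitsAt k Θ (.ex π ψ)) (τ : ↥T) :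
    FitsAt k (Function.update Θ π (some τ)) ψ := by
  obtain ⟨s, hdom, hfree, hcard⟩ := hΘ
  refine ⟨insert π s, fun π' => ?_, Finset.subset_insert_iff.mpr hfree, ?_⟩
  · by_cases hπ : π' = π <;> simp [Function.update, hπ, hdom]
  · rwa [Finset.insert_union, ← Finset.union_insert]

theorem FitsAt.isSome_of_mem_tvars {φ : LTL (X × ℕ)} (hΘ : FitsAt k Θ (.qf φ)) :
    ∀ π ∈ φ.tvars, (Θ π).isSome := by
  obtain ⟨s, hdom, hfree, -⟩ := hΘ
  exact fun π hπ => (hdom π).mpr (hfree hπ)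

theorem FitsAt.hasDomCard {φ : LTL (X × ℕ)} (hΘ : FitsAt k Θ (.qf φ)) : HasDomCard Θ k := by
  obtain ⟨s, hdom, hfree, hcard⟩ := hΘ
  have hvars : (HyperLTL.qf φ).vars ⊆ s := hfree
  exact ⟨s, hdom, by rwa [Finset.union_eq_left.mpr hvars] at hcard⟩

end FitsAt

theorem hsat_zero_iff_hsat_mapAssign {T T' : Set (ℕ → X → Bool)} {C : Set (LTL (X × ℕ))}
    {R : (ℕ → (X × ℕ) → Bool) → (ℕ → (X × ℕ) → Bool) → Prop}
    (hR : ∀ φ ∈ C, ∀ τ τ', R τ τ' → (LTL.Sat τ φ ↔ LTL.Sat τ' φ)) {k : ℕ} (f : ↥T ≃ ↥T')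
    (hf : ∀ Θ : ℕ → Option ↥T, HasDomCard Θ k → R (flat Θ) (flat (mapAssign f Θ))) :
    ∀ (ψ : HyperLTL X) (Θ : ℕ → Option ↥T), FitsAt k Θ ψ → ψ.InClass C →
      (HSat Θ 0 ψ ↔ HSat (mapAssign f Θ) 0 ψ)
  | .ex π ψ, Θ, hΘ, hψ => f.exists_congr fun τ => by
      rw [← mapAssign_update]
      exact hsat_zero_iff_hsat_mapAssign hR f hf ψ _ (hΘ.update τ) hψ
  | .all π ψ, Θ, hΘ, hψ => f.forall_congr fun τ => by
      rw [← mapAssign_update]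
      -- `.all π ψ` and `.ex π ψ` have the same free and bound variables
      exact hsat_zero_iff_hsat_mapAssign hR f hf ψ _ (FitsAt.update hΘ τ) hψ
  | .qf φ, Θ, hΘ, hφ => hsatQF_zero_iff_of_related hR hφ hΘ.isSome_of_mem_tvars
      (fun π hπ => by simpa [mapAssign] using hΘ.isSome_of_mem_tvars π hπ) (hf Θ hΘ.hasDomCard)

end

theorem kcEquiv_preserves_hyperLTL_sentences_general
    {X : Type} (C : Set (LTL (X × ℕ)))
    (R : (ℕ → (X × ℕ) → Bool) → (ℕ → (X × ℕ) → Bool) → Prop)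
    (hR : EquivOnTracesFor C R)
    (φ : HyperLTL X) (hclosed : φ.Closed) (hφ : φ.InClass C)
    (T T' : Set (ℕ → X → Bool))
    (hTT' : ∃ f : ↥T ≃ ↥T', KCEquivWith R φ.vars.card T T' f) :
    HModels T φ ↔ HModels T' φ := by
  obtain ⟨f, hf, -⟩ := hTT'
  -- `mapAssign f` sends the empty assignment to the empty one definitionally
  exact hsat_zero_iff_hsat_mapAssign hR.2 f hf φ _ (fitsAt_empty_of_closed hclosed) hφ

/-- Theorem. Let `C` be a class of LTL formulas and `R` an equivalence
on traces for `C`. For every HyperLTL sentence `φ ∈ 2^C` and all sets of infinite traces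
`T` and `T'` that are `(|V(φ)|, C)`-equivalent: `T ⊨_H φ` iff `T' ⊨_H φ`. -/
theorem kcEquiv_preserves_hyperLTL_sentences
    {X : Type} [Finite X] (C : Set (LTL (X × ℕ)))
    (R : (ℕ → (X × ℕ) → Bool) → (ℕ → (X × ℕ) → Bool) → Prop)
    (hR : EquivOnTracesFor C R)
    (φ : HyperLTL X) (hclosed : φ.Closed) (hφ : φ.InClass C)
    (T T' : Set (ℕ → X → Bool))
    (hTT' : ∃ f : ↥T ≃ ↥T', KCEquivWith R φ.vars.card T T' f) :
    HModels T φ ↔ HModels T' φ :=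
  kcEquiv_preserves_hyperLTL_sentences_general C R hR φ hclosed hφ T T' hTT'
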